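/- The union of an I₀ set with a finite subset of ℕ is an I₀ set. -/

import Mathlib

/-!
Adding the points of `F` one at a time, it suffices, for `x ∉ E`, to find an almost periodic `φ`
vanishing on `E` with prescribed value at `x`. A continuous function on a torus `(ℝ/ℤ)ᵐ` composed
with an orbit `n ↦ n • θ` is almost periodic (Stone–Weierstrass for `mFourier`), so a bump at
`x • θ` works as soon as some Bohr neighbourhood `{n | dist (n • θ) (x • θ) < δ}` of `x` misses `E`.

Otherwise every Bohr neighbourhood of `x` meets `E`, and then in infinitely many points (an extra
irrational frequency excludes any finite set). By compactness of the tori, finitely many points of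
`E` meet all Bohr neighbourhoods with `k` frequencies at scale `1 / (k + 1)`; choosing such finite
batches disjointly, alternately for `A` and for `E \ A`, puts `x` in the Bohr closure of both. Since
almost periodic sequences are Bohr continuous, an interpolant of the indicator of `A` would take
values near `1` and near `0` at `x`.
-/

/-- A sequence `ψ : ℕ → ℂ` is almost periodic if it is a uniform limit of
trigonometric polynomials. -/
def AlmostPeriodic (ψ : ℕ → ℂ) : Prop :=
  ∀ ε : ℝ, 0 < ε → ∃ (m : ℕ) (c : Fin m → ℂ) (α : Fin m → ℝ),
    ∀ n : ℕ, ‖ψ n - ∑ j, c j * Complex.exp (2 * (Real.pi : ℂ) * Complex.I * (n : ℂ) * (α j : ℂ))‖ < ε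

/-- A set `E ⊆ ℕ` is an `I₀` set if every bounded function on `E` extends to an
almost periodic sequence on `ℕ`. -/
def IsI0Set (E : Set ℕ) : Prop :=
  ∀ b : ℕ → ℂ, (∃ C : ℝ, ∀ n ∈ E, ‖b n‖ ≤ C) →
    ∃ ψ : ℕ → ℂ, AlmostPeriodic ψ ∧ ∀ r ∈ E, ψ r = b r

open Complex Real UnitAddTorus Function Topology

theorem fourier_one_nsmul_coe (n : ℕ) (α : ℝ) :
    fourier 1 (n • (α : UnitAddCircle)) = exp (2 * π * I * n * α) := by
  rw [← AddCircle.coe_nsmul, fourier_coe_apply, nsmul_eq_mul]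
  push_cast
  ring_nf

theorem mFourier_nsmul_coe {d : Type*} [Fintype d] (k : d → ℤ) (s : d → ℝ) (n : ℕ) :
    mFourier k (n • fun i ↦ (s i : UnitAddCircle)) = exp (2 * π * I * n * ↑(∑ i, k i * s i)) := by
  simp only [mFourier, ContinuousMap.coe_mk, Pi.smul_apply, ← AddCircle.coe_nsmul,
    fourier_coe_apply, ← Complex.exp_sum]
  congr 1
  push_cast
  rw [Finset.mul_sum, Finset.sum_congr rfl]
  intro i _
  rw [nsmul_eq_mul]; ring

theorem AlmostPeriodic.add {f g : ℕ → ℂ} (hf : AlmostPeriodic f) (hg : AlmostPeriodic g) :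
    AlmostPeriodic (f + g) := by
  intro ε hε
  obtain ⟨m, c, α, hfα⟩ := hf (ε / 2) (half_pos hε)
  obtain ⟨m', c', α', hgα⟩ := hg (ε / 2) (half_pos hε)
  refine ⟨m + m', Fin.append c c', Fin.append α α', fun n ↦ ?_⟩
  simp only [Fin.sum_univ_add, Fin.append_left, Fin.append_right, Pi.add_apply]
  calc _ = ‖(f n - ∑ j, c j * exp (2 * π * I * n * α j))
          + (g n - ∑ j, c' j * exp (2 * π * I * n * α' j))‖ := by ring_nf
    _ < ε := (norm_add_le _ _).trans_lt (by linarith [hfα n, hgα n])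

theorem almostPeriodic_comp_nsmul {d : Type*} [Fintype d] (F : C(UnitAddTorus d, ℂ))
    (t : UnitAddTorus d) : AlmostPeriodic fun n ↦ F (n • t) := by
  obtain ⟨s, rfl⟩ := QuotientAddGroup.mk_surjective.comp_left t
  intro ε hε
  have hF : F ∈ (Submodule.span ℂ (Set.range (mFourier (d := d)))).topologicalClosure := by
    rw [span_mFourier_closure_eq_top]; trivial
  obtain ⟨g, hg, hFg⟩ := Metric.mem_closure_iff.1 hF ε hε
  obtain ⟨m, c, v, rfl⟩ := Submodule.mem_span_set'.1 hg
  choose k hk using fun j ↦ (v j).2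
  refine ⟨m, c, fun j ↦ ∑ i, k j i * s i, fun n ↦ ?_⟩
  have hg : ∑ j, c j * exp (2 * π * I * n * ↑(∑ i, k j i * s i)) =
      (∑ j, c j • (v j : C(UnitAddTorus d, ℂ))) (n • fun i ↦ (s i : UnitAddCircle)) := by
    simp only [ContinuousMap.sum_apply, ContinuousMap.smul_apply, ← hk, mFourier_nsmul_coe,
      smul_eq_mul]
  rw [hg, ← dist_eq_norm, ← Function.comp_def]
  exact (ContinuousMap.dist_apply_le_dist _).trans_lt hFg

def bohrNhd (x : ℕ) {m : ℕ} (θ : UnitAddTorus (Fin m)) (δ : ℝ) : Set ℕ :=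
  {n | dist (n • θ) (x • θ) < δ}

def MemBohrClosure (x : ℕ) (S : Set ℕ) : Prop :=
  ∀ (m : ℕ) (θ : UnitAddTorus (Fin m)) (δ : ℝ), 0 < δ → (S ∩ bohrNhd x θ δ).Nonempty

theorem bohrNhd_subset_bohrNhd {x m k : ℕ} {θ : UnitAddTorus (Fin m)} {θ' : UnitAddTorus (Fin k)}
    {δ δ' : ℝ} (hθ : ∀ j, ∃ i, θ' i = θ j) (hδ : δ' ≤ δ) : bohrNhd x θ' δ' ⊆ bohrNhd x θ δ := by
  intro n hn
  refine lt_of_le_of_lt ((dist_pi_le_iff dist_nonneg).2 fun j ↦ ?_) (hn.trans_le hδ)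
  obtain ⟨i, hi⟩ := hθ j
  simpa only [Pi.smul_apply, hi] using dist_le_pi_dist (n • θ') (x • θ') i

theorem AlmostPeriodic.exists_bohrNhd {ψ : ℕ → ℂ} (hψ : AlmostPeriodic ψ) (x : ℕ) {ε : ℝ}
    (hε : 0 < ε) : ∃ (m : ℕ) (θ : UnitAddTorus (Fin m)) (δ : ℝ), 0 < δ ∧
      ∀ n ∈ bohrNhd x θ δ, ‖ψ n - ψ x‖ < ε := by
  obtain ⟨m, c, α, hα⟩ := hψ (ε / 3) (by positivity)
  let θ : UnitAddTorus (Fin m) := fun j ↦ (α j : UnitAddCircle)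
  let F : UnitAddTorus (Fin m) → ℂ := fun t ↦ ∑ j, c j * fourier 1 (t j)
  have hF (n : ℕ) : dist (ψ n) (F (n • θ)) < ε / 3 := by
    simpa only [dist_eq_norm, F, θ, Pi.smul_apply, fourier_one_nsmul_coe] using hα n
  obtain ⟨δ, hδ, hFδ⟩ := Metric.continuous_iff.1 (by fun_prop : Continuous F) (x • θ) (ε / 3)
    (by positivity)
  refine ⟨m, θ, δ, hδ, fun n hn ↦ ?_⟩
  rw [← dist_eq_norm]
  calc dist (ψ n) (ψ x) ≤ dist (ψ n) (F (n • θ)) + dist (F (n • θ)) (F (x • θ))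
        + dist (F (x • θ)) (ψ x) := dist_triangle4 _ _ _ _
    _ < ε := by linarith [hF n, hF x, hFδ (n • θ) hn, dist_comm (F (x • θ)) (ψ x)]

theorem IsI0Set.not_memBohrClosure_split {E A : Set ℕ} (hE : IsI0Set E) (hA : A ⊆ E) (x : ℕ) :
    ¬ (MemBohrClosure x A ∧ MemBohrClosure x (E \ A)) := by
  classical
  rintro ⟨hxA, hxEA⟩
  obtain ⟨φ, hφ, hφE⟩ := hE (A.indicator 1) ⟨1, fun n _ ↦ by
    by_cases h : n ∈ A <;> simp [h]⟩
  obtain ⟨m, θ, δ, hδ, hφx⟩ := hφ.exists_bohrNhd x (ε := 1 / 2) (by norm_num)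
  obtain ⟨e, heA, he⟩ := hxA m θ δ hδ
  obtain ⟨e', ⟨he'E, he'A⟩, he'⟩ := hxEA m θ δ hδ
  have h1 : ‖1 - φ x‖ < 1 / 2 := by simpa [hφE e (hA heA), heA] using hφx e he
  have h0 : ‖φ x‖ < 1 / 2 := by simpa [hφE e' he'E, he'A] using hφx e' he'
  apply lt_irrefl (1 : ℝ)
  calc (1 : ℝ) = ‖(1 - φ x) + φ x‖ := by simp
    _ ≤ ‖1 - φ x‖ + ‖φ x‖ := norm_add_le _ _
    _ < 1 := by linarith

theorem MemBohrClosure.infinite_inter_bohrNhd {x : ℕ} {E : Set ℕ} (h : MemBohrClosure x E)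
    (hx : x ∉ E) {m : ℕ} (θ : UnitAddTorus (Fin m)) {δ : ℝ} (hδ : 0 < δ) :
    (E ∩ bohrNhd x θ δ).Infinite := by
  intro hfin
  -- an irrational frequency moves every `n ≠ x` away from `x`
  let β : UnitAddCircle := (√2 : ℝ)
  have hβ (n : ℕ) (hn : n ≠ x) : 0 < dist (n • β) (x • β) := by
    rw [dist_pos, Ne, ← sub_eq_zero, ← AddCircle.coe_nsmul, ← AddCircle.coe_nsmul,
      ← AddCircle.coe_sub, AddCircle.coe_eq_zero_iff]
    rintro ⟨k, hk⟩
    have hirr : Irrational (((n - x : ℤ) : ℝ) * √2) :=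
      irrational_sqrt_two.intCast_mul (sub_ne_zero.2 (by exact_mod_cast hn))
    refine hirr.ne_int k ?_
    rw [zsmul_one] at hk
    rw [hk, nsmul_eq_mul, nsmul_eq_mul]
    push_cast
    ring
  have hη : ∀ᶠ η in 𝓝[>] (0 : ℝ), ∀ n ∈ E ∩ bohrNhd x θ δ, η < dist (n • β) (x • β) :=
    (Filter.eventually_all_finite hfin).2 fun n hn ↦ nhdsWithin_le_nhds
      (eventually_lt_nhds (hβ n fun h ↦ hx (h ▸ hn.1)))
  obtain ⟨η, hηS, hη0⟩ := (hη.and self_mem_nhdsWithin).exists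
  obtain ⟨e, heE, he⟩ := h (m + 1) (Fin.cons β θ) (min δ η) (lt_min hδ hη0)
  have heS : e ∈ E ∩ bohrNhd x θ δ :=
    ⟨heE, bohrNhd_subset_bohrNhd (fun j ↦ ⟨j.succ, Fin.cons_succ _ _ _⟩) (min_le_left _ _) he⟩
  have hβe := dist_le_pi_dist (e • (Fin.cons β θ : UnitAddTorus (Fin (m + 1))))
    (x • (Fin.cons β θ : UnitAddTorus (Fin (m + 1)))) 0
  simp only [Pi.smul_apply, Fin.cons_zero] at hβe
  exact (((hηS e heS).trans_le hβe).trans (he.trans_le (min_le_right _ _))).false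

theorem exists_finset_forall_mem_bohrNhd {x m : ℕ} {E : Set ℕ} {δ : ℝ}
    (hE : ∀ θ : UnitAddTorus (Fin m), (E ∩ bohrNhd x θ δ).Infinite) (D : Finset ℕ) :
    ∃ S : Finset ℕ, ↑S ⊆ E \ ↑D ∧
      ∀ θ : UnitAddTorus (Fin m), ∃ e ∈ S, e ∈ bohrNhd x θ δ := by
  let U (e : ↥(E \ ↑D)) : Set (UnitAddTorus (Fin m)) := {θ | ↑e ∈ bohrNhd x θ δ}
  have hU (e : ↥(E \ ↑D)) : IsOpen (U e) := isOpen_lt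
    ((continuous_id.nsmul _).dist (continuous_id.nsmul _)) continuous_const
  have hcover : Set.univ ⊆ ⋃ e, U e := fun θ _ ↦ by
    obtain ⟨e, ⟨heE, he⟩, heD⟩ := ((hE θ).sdiff D.finite_toSet).nonempty
    exact Set.mem_iUnion.2 ⟨⟨e, heE, heD⟩, he⟩
  obtain ⟨t, ht⟩ := isCompact_univ.elim_finite_subcover U hU hcover
  refine ⟨t.map (Embedding.subtype _), ?_, fun θ ↦ ?_⟩
  · rw [Finset.coe_map]
    exact Set.image_subset_iff.2 fun e _ ↦ e.2
  · obtain ⟨e, het, he⟩ := Set.mem_iUnion₂.1 (ht (Set.mem_univ θ))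
    exact ⟨e, Finset.mem_map_of_mem _ het, he⟩

theorem exists_pairwise_disjoint_finset {α : Type*} (P : ℕ → Finset α → Prop)
    (hP : ∀ k (D : Finset α), ∃ S, Disjoint S D ∧ P k S) :
    ∃ T : ℕ → Finset α, Pairwise (Disjoint on T) ∧ ∀ k, P k (T k) := by
  classical
  choose S hSD hSP using hP
  -- `U k` collects the sets chosen before stage `k`
  let U : ℕ → Finset α := fun k ↦ Nat.rec ∅ (fun k D ↦ D ∪ S k D) k
  have hU (k : ℕ) : U (k + 1) = U k ∪ S k (U k) := rfl
  have hmono : Monotone U := monotone_nat_of_le_succ fun k ↦ hU k ▸ Finset.subset_union_left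
  have hSU {j k : ℕ} (hjk : j < k) : S j (U j) ⊆ U k :=
    (hU j ▸ Finset.subset_union_right).trans (hmono hjk)
  refine ⟨fun k ↦ S k (U k), fun j k hjk ↦ ?_, fun k ↦ hSP k _⟩
  rcases hjk.lt_or_gt with h | h
  · exact (hSD k (U k)).symm.mono_left (hSU h)
  · exact (hSD j (U j)).mono_right (hSU h)

theorem MemBohrClosure.exists_split {x : ℕ} {E : Set ℕ} (h : MemBohrClosure x E) (hx : x ∉ E) :
    ∃ A ⊆ E, MemBohrClosure x A ∧ MemBohrClosure x (E \ A) := by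
  obtain ⟨T, hT, hTP⟩ := exists_pairwise_disjoint_finset
    (fun k S ↦ ↑S ⊆ E ∧ ∀ θ : UnitAddTorus (Fin k), ∃ e ∈ S, e ∈ bohrNhd x θ (1 / (k + 1)))
    fun k D ↦ by
      obtain ⟨S, hSED, hS⟩ := exists_finset_forall_mem_bohrNhd
        (fun θ ↦ h.infinite_inter_bohrNhd hx θ Nat.one_div_pos_of_nat) D
      exact ⟨S, Finset.disjoint_left.2 fun e he ↦ (hSED he).2,
        fun e he ↦ (hSED he).1, hS⟩
  have hlate (m : ℕ) (θ : UnitAddTorus (Fin m)) (δ : ℝ) (hδ : 0 < δ) :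
      ∃ K, ∀ k ≥ K, ∃ e ∈ T k, e ∈ bohrNhd x θ δ := by
    obtain ⟨N, hN⟩ := exists_nat_one_div_lt hδ
    refine ⟨m + N, fun k hk ↦ ?_⟩
    let θ' : UnitAddTorus (Fin k) := fun i ↦ if hi : (i : ℕ) < m then θ ⟨i, hi⟩ else 0
    obtain ⟨e, he, heθ'⟩ := (hTP k).2 θ'
    refine ⟨e, he, bohrNhd_subset_bohrNhd (fun j ↦ ⟨Fin.castLE (by omega) j, by simp [θ']⟩)
      ?_ heθ'⟩
    refine le_trans ?_ hN.le
    gcongr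
    omega
  refine ⟨⋃ k, ↑(T (2 * k)), Set.iUnion_subset fun k ↦ (hTP _).1, fun m θ δ hδ ↦ ?_,
    fun m θ δ hδ ↦ ?_⟩
  · obtain ⟨K, hK⟩ := hlate m θ δ hδ
    obtain ⟨e, he, heθ⟩ := hK (2 * K) (by omega)
    exact ⟨e, Set.mem_iUnion.2 ⟨K, he⟩, heθ⟩
  · obtain ⟨K, hK⟩ := hlate m θ δ hδ
    obtain ⟨e, he, heθ⟩ := hK (2 * K + 1) (by omega)
    refine ⟨e, ⟨(hTP _).1 he, fun heA ↦ ?_⟩, heθ⟩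
    obtain ⟨k, hk⟩ := Set.mem_iUnion.1 heA
    exact Finset.disjoint_left.1 (hT (by omega : 2 * k ≠ 2 * K + 1)) hk he

theorem IsI0Set.not_memBohrClosure {x : ℕ} {E : Set ℕ} (hE : IsI0Set E) (hx : x ∉ E) :
    ¬ MemBohrClosure x E := fun h ↦ by
  obtain ⟨A, hAE, hA⟩ := h.exists_split hx
  exact hE.not_memBohrClosure_split hAE x hA

theorem IsI0Set.exists_almostPeriodic_bump {x : ℕ} {E : Set ℕ} (hE : IsI0Set E) (hx : x ∉ E)
    (c : ℂ) : ∃ φ : ℕ → ℂ, AlmostPeriodic φ ∧ (∀ e ∈ E, φ e = 0) ∧ φ x = c := by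
  have hsep := hE.not_memBohrClosure hx
  simp only [MemBohrClosure, not_forall, Set.not_nonempty_iff_eq_empty] at hsep
  obtain ⟨m, θ, δ, hδ, hEθ⟩ := hsep
  let F : C(UnitAddTorus (Fin m), ℂ) :=
    ⟨fun t ↦ c * (max 0 (1 - dist t (x • θ) / δ) : ℝ), by fun_prop⟩
  refine ⟨fun n ↦ F (n • θ), almostPeriodic_comp_nsmul F θ, fun e he ↦ ?_, by simp [F]⟩
  have hfar : δ ≤ dist (e • θ) (x • θ) :=
    not_lt.1 fun hlt ↦ (Set.eq_empty_iff_forall_notMem.1 hEθ e) ⟨he, hlt⟩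
  have hbump : 1 - dist (e • θ) (x • θ) / δ ≤ 0 := sub_nonpos.2 ((one_le_div hδ).2 hfar)
  simp [F, max_eq_left hbump]

theorem IsI0Set.insert {E : Set ℕ} (hE : IsI0Set E) (x : ℕ) : IsI0Set (insert x E) := by
  by_cases hx : x ∈ E
  · rwa [Set.insert_eq_of_mem hx]
  intro b ⟨C, hC⟩
  obtain ⟨ψ, hψ, hψE⟩ := hE b ⟨C, fun n hn ↦ hC n (Set.mem_insert_of_mem x hn)⟩
  obtain ⟨φ, hφ, hφE, hφx⟩ := hE.exists_almostPeriodic_bump hx (b x - ψ x)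
  refine ⟨ψ + φ, hψ.add hφ, ?_⟩
  rintro r (rfl | hr)
  · simp [hφx]
  · simp [hφE r hr, hψE r hr]

theorem I0_union_finite (E F : Set ℕ) (hE : IsI0Set E) (hF : F.Finite) :
    IsI0Set (E ∪ F) := by
  induction F, hF using Set.Finite.induction_on with
  | empty => rwa [Set.union_empty]
  | insert _ _ ih =>
    rw [Set.union_insert]
    exact ih.insert _
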